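/- arXiv:1006.3305 — 3 statements merged into one kernel-verified Lean document; each statement's English description precedes it below -/
import Mathlib

section
/- Let n ≥ 1 and let Λ = M(ℤⁿ) ⊂ ℝⁿ be the image of ℤⁿ under an invertible linear map M : ℝⁿ → ℝⁿ. There exists a constant C = C(Λ) such that: for any functions g_1,…,g_n : (0,∞) → [0,∞), each integrable on (0,∞), and points t_1,…,t_n ∈ (0,∞) such that g_i is nondecreasing on (0, t_i] and nonincreasing on [t_i, ∞) for each i, one has ∑_{x ∈ Λ, x_i > 0 for all i} ∏_{i=1}^n g_i(x_i) ≤ C · ∏_{i=1}^n ( ∫_0^∞ g_i(t) dt + g_i(t_i) ). -/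
/-!
If `g` is nondecreasing up to `t` and nonincreasing after it, then on a window `[y - r, y + r]`
it is bounded by `g (y + r)` when the window lies left of `t`, by `g (y - r)` when it lies right
of `t`, and by `g t` otherwise; the sum of these three bounds is a majorant of integral
`2 ∫ g + 2 r g(t)`. The cells `M (m + [0,1)ⁿ)` are disjoint, have volume `|det M|`, and lie
within `‖M‖` of `M m` in each coordinate, so `|det M|` times each term of the lattice sum is at
most the integral of the product majorant over the cell of `m`. Summing over the cells bounds
the lattice sum by `|det M|⁻¹` times the product of the one-dimensional integrals.
-/

open MeasureTheory Set Function

noncomputable section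

section UnimodalMajorant

variable {g : ℝ → ℝ} {t r x y : ℝ}

def unimodalMajorant (g : ℝ → ℝ) (t r : ℝ) (y : ℝ) : ℝ :=
  (Ioi 0).indicator g (y + r) + (Ioi 0).indicator g (y - r) +
    (Icc (t - r) (t + r)).indicator (fun _ => g t) y

theorem unimodalMajorant_nonneg (hg0 : ∀ s ∈ Ioi (0 : ℝ), 0 ≤ g s) (ht : 0 < t) :
    0 ≤ unimodalMajorant g t r y :=
  add_nonneg (add_nonneg (indicator_nonneg hg0 _) (indicator_nonneg hg0 _))
    (indicator_nonneg (fun _ _ => hg0 t ht) _)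

theorem le_unimodalMajorant (hg0 : ∀ s ∈ Ioi (0 : ℝ), 0 ≤ g s) (ht : 0 < t)
    (hmono : MonotoneOn g (Ioc 0 t)) (hanti : AntitoneOn g (Ici t))
    (hx : 0 < x) (hxy : |y - x| ≤ r) :
    g x ≤ unimodalMajorant g t r y := by
  have hleft := indicator_nonneg hg0 (y + r)
  have hright := indicator_nonneg hg0 (y - r)
  have hpeak := indicator_nonneg (fun _ _ => hg0 t ht) (s := Icc (t - r) (t + r)) y
  obtain ⟨hyx, hxy'⟩ := abs_sub_le_iff.1 hxy
  suffices g x ≤ (Ioi 0).indicator g (y + r) ∨ g x ≤ (Ioi 0).indicator g (y - r) ∨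
      g x ≤ (Icc (t - r) (t + r)).indicator (fun _ => g t) y by
    unfold unimodalMajorant
    rcases this with h | h | h <;> linarith
  rcases le_total x t with hxt | htx
  · by_cases hyt : y + r ≤ t
    · left
      rw [indicator_of_mem (show y + r ∈ Ioi 0 from mem_Ioi.2 (by linarith))]
      exact hmono ⟨hx, hxt⟩ ⟨by linarith, hyt⟩ (by linarith)
    · right; right
      rw [indicator_of_mem (show y ∈ Icc (t - r) (t + r) from ⟨by linarith, by linarith⟩)]
      exact hmono ⟨hx, hxt⟩ ⟨ht, le_rfl⟩ hxt
  · by_cases hyt : t ≤ y - r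
    · right; left
      rw [indicator_of_mem (show y - r ∈ Ioi 0 from mem_Ioi.2 (by linarith))]
      exact hanti hyt htx (by linarith)
    · right; right
      rw [indicator_of_mem (show y ∈ Icc (t - r) (t + r) from ⟨by linarith, by linarith⟩)]
      exact hanti self_mem_Ici htx htx

theorem integrable_unimodalMajorant (hgi : IntegrableOn g (Ioi 0)) :
    Integrable (unimodalMajorant g t r) := by
  have hg : Integrable ((Ioi 0).indicator g) := (integrable_indicator_iff measurableSet_Ioi).2 hgi
  exact ((hg.comp_add_right r).add (hg.comp_sub_right r)).add
    ((integrable_indicator_iff measurableSet_Icc).2 (integrableOn_const measure_Icc_lt_top.ne))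

theorem integral_unimodalMajorant (hgi : IntegrableOn g (Ioi 0)) (hr : 0 ≤ r) :
    ∫ y, unimodalMajorant g t r y = 2 * (∫ s in Ioi 0, g s) + 2 * r * g t := by
  have hg : Integrable ((Ioi 0).indicator g) := (integrable_indicator_iff measurableSet_Ioi).2 hgi
  have hleft : Integrable fun y => (Ioi 0).indicator g (y + r) := hg.comp_add_right r
  have hright : Integrable fun y => (Ioi 0).indicator g (y - r) := hg.comp_sub_right r
  have hpeak : Integrable fun y => (Icc (t - r) (t + r)).indicator (fun _ => g t) y :=
    (integrable_indicator_iff measurableSet_Icc).2 (integrableOn_const measure_Icc_lt_top.ne)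
  have hshifts : Integrable fun y => (Ioi 0).indicator g (y + r) + (Ioi 0).indicator g (y - r) :=
    hleft.add hright
  unfold unimodalMajorant
  rw [integral_add hshifts hpeak, integral_add hleft hright,
    integral_add_right_eq_self (fun s => (Ioi 0).indicator g s),
    integral_sub_right_eq_self (fun s => (Ioi 0).indicator g s),
    integral_indicator measurableSet_Ioi, integral_indicator_const _ measurableSet_Icc,
    Real.volume_real_Icc_of_le (by linarith), smul_eq_mul]
  ring

theorem integral_unimodalMajorant_le (hg0 : ∀ s ∈ Ioi (0 : ℝ), 0 ≤ g s) (ht : 0 < t)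
    (hgi : IntegrableOn g (Ioi 0)) (hr : 0 ≤ r) :
    ∫ y, unimodalMajorant g t r y ≤ 2 * (r + 1) * ((∫ s in Ioi 0, g s) + g t) := by
  have hI : 0 ≤ ∫ s in Ioi 0, g s := setIntegral_nonneg measurableSet_Ioi hg0
  have hgt := hg0 t ht
  rw [integral_unimodalMajorant hgi hr]
  nlinarith

end UnimodalMajorant

section ProdUnimodalMajorant

variable {ι : Type*} [Fintype ι] {g : ι → ℝ → ℝ} {t : ι → ℝ} {r : ℝ}

theorem prod_le_prod_unimodalMajorant (hg0 : ∀ i, ∀ s ∈ Ioi (0 : ℝ), 0 ≤ g i s)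
    (ht : ∀ i, 0 < t i) (hmono : ∀ i, MonotoneOn (g i) (Ioc 0 (t i)))
    (hanti : ∀ i, AntitoneOn (g i) (Ici (t i))) {x y : ι → ℝ} (hx : ∀ i, 0 < x i)
    (hxy : ∀ i, |y i - x i| ≤ r) :
    ∏ i, g i (x i) ≤ ∏ i, unimodalMajorant (g i) (t i) r (y i) :=
  Finset.prod_le_prod (fun i _ => hg0 i _ (hx i)) fun i _ =>
    le_unimodalMajorant (hg0 i) (ht i) (hmono i) (hanti i) (hx i) (hxy i)

theorem integral_prod_unimodalMajorant_le (hg0 : ∀ i, ∀ s ∈ Ioi (0 : ℝ), 0 ≤ g i s)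
    (ht : ∀ i, 0 < t i) (hgi : ∀ i, IntegrableOn (g i) (Ioi 0)) (hr : 0 ≤ r) :
    ∫ y : ι → ℝ, ∏ i, unimodalMajorant (g i) (t i) r (y i) ≤
      (2 * (r + 1)) ^ Fintype.card ι * ∏ i, ((∫ s in Ioi 0, g i s) + g i (t i)) := by
  rw [integral_fintype_prod_volume_eq_prod, ← Finset.card_univ, ← Finset.prod_const,
    ← Finset.prod_mul_distrib]
  exact Finset.prod_le_prod (fun i _ => integral_nonneg fun _ => unimodalMajorant_nonneg
    (hg0 i) (ht i)) fun i _ => integral_unimodalMajorant_le (hg0 i) (ht i) (hgi i) hr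

end ProdUnimodalMajorant

theorem summable_and_tsum_le_integral_of_le_setIntegral {ι X : Type*} [Countable ι]
    [MeasurableSpace X] {μ : Measure X} {s : ι → Set X} (hs : ∀ i, MeasurableSet (s i))
    (hd : Pairwise (Disjoint on s)) {f : X → ℝ} (hf : Integrable f μ) (hf0 : ∀ x, 0 ≤ f x)
    {a : ι → ℝ} (ha0 : ∀ i, 0 ≤ a i) (ha : ∀ i, a i ≤ ∫ x in s i, f x ∂μ) :
    Summable a ∧ ∑' i, a i ≤ ∫ x, f x ∂μ := by
  have hsum := hasSum_integral_iUnion hs hd hf.integrableOn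
  refine ⟨hsum.summable.of_nonneg_of_le ha0 ha, ?_⟩
  calc ∑' i, a i ≤ ∑' i, ∫ x in s i, f x ∂μ :=
        (hsum.summable.of_nonneg_of_le ha0 ha).tsum_le_tsum ha hsum.summable
    _ = ∫ x in ⋃ i, s i, f x ∂μ := hsum.tsum_eq
    _ ≤ ∫ x, f x ∂μ := setIntegral_le_integral hf (Filter.Eventually.of_forall hf0)

section LatticeCell

variable {ι : Type*} (M : (ι → ℝ) ≃ₗ[ℝ] (ι → ℝ))

def latticeCell (m : ι → ℤ) : Set (ι → ℝ) :=
  M '' univ.pi fun j => Ico (m j : ℝ) (m j + 1)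

theorem measurableSet_latticeCell [Fintype ι] (m : ι → ℤ) : MeasurableSet (latticeCell M m) := by
  have hM : Measurable M.symm := (LinearMap.continuous_of_finiteDimensional _).measurable
  rw [latticeCell, M.image_eq_preimage_symm]
  exact hM (MeasurableSet.univ_pi fun _ => measurableSet_Ico)

theorem pairwise_disjoint_latticeCell : Pairwise (Disjoint on latticeCell M) := by
  intro m m' hne
  refine disjoint_left.2 ?_
  rintro _ ⟨c, hc, rfl⟩ ⟨c', hc', hcc'⟩
  obtain rfl := M.injective hcc'
  refine hne (funext fun j => ?_)
  rw [← Int.floor_eq_iff.2 (hc j (mem_univ j)), ← Int.floor_eq_iff.2 (hc' j (mem_univ j))]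

theorem volume_latticeCell [Fintype ι] (m : ι → ℤ) :
    volume (latticeCell M m) = ENNReal.ofReal |LinearMap.det (M : (ι → ℝ) →ₗ[ℝ] (ι → ℝ))| := by
  rw [latticeCell, ← M.coe_coe, Measure.addHaar_image_linearMap, volume_pi_pi]
  simp [Real.volume_Ico]

theorem abs_sub_le_of_mem_latticeCell [Fintype ι] {m : ι → ℤ} {y : ι → ℝ}
    (hy : y ∈ latticeCell M m) (i : ι) :
    |y i - M (fun j => (m j : ℝ)) i| ≤ ‖(M.toContinuousLinearEquiv : (ι → ℝ) →L[ℝ] (ι → ℝ))‖ := by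
  obtain ⟨c, hc, rfl⟩ := hy
  set m' : ι → ℝ := fun j => (m j : ℝ)
  have hcm : ‖c - m'‖ ≤ 1 := by
    refine (pi_norm_le_iff_of_nonneg zero_le_one).2 fun j => ?_
    obtain ⟨h₁, h₂⟩ := hc j (mem_univ j)
    rw [Real.norm_eq_abs, abs_le]
    exact ⟨by simp only [Pi.sub_apply, m']; linarith, by simp only [Pi.sub_apply, m']; linarith⟩
  set L : (ι → ℝ) →L[ℝ] (ι → ℝ) := (M.toContinuousLinearEquiv : (ι → ℝ) →L[ℝ] (ι → ℝ))
  calc |M c i - M m' i| = ‖L (c - m') i‖ := by simp [L]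
    _ ≤ ‖L (c - m')‖ := norm_le_pi_norm _ i
    _ ≤ ‖L‖ * ‖c - m'‖ := L.le_opNorm _
    _ ≤ ‖L‖ := mul_le_of_le_one_right (norm_nonneg _) hcm

theorem summable_and_tsum_le_of_le_on_latticeCell [Fintype ι] {κ : Type*} {e : κ → ι → ℤ}
    (he : Injective e)
    {f : (ι → ℝ) → ℝ} (hf : Integrable f) (hf0 : ∀ x, 0 ≤ f x) {a : κ → ℝ}
    (ha : ∀ k, ∀ y ∈ latticeCell M (e k), a k ≤ f y) (ha0 : ∀ k, 0 ≤ a k) :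
    Summable a ∧
      ∑' k, a k ≤ (∫ y, f y) / |LinearMap.det (M : (ι → ℝ) →ₗ[ℝ] (ι → ℝ))| := by
  have hD : 0 < |LinearMap.det (M : (ι → ℝ) →ₗ[ℝ] (ι → ℝ))| :=
    abs_pos.2 (LinearEquiv.isUnit_det' M).ne_zero
  have := he.countable
  have hcell : ∀ k, |LinearMap.det (M : (ι → ℝ) →ₗ[ℝ] (ι → ℝ))| * a k ≤
      ∫ y in latticeCell M (e k), f y := fun k => by
    have := setIntegral_ge_of_const_le_real (measurableSet_latticeCell M (e k))
      (by simp [volume_latticeCell]) (ha k) hf.integrableOn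
    rwa [measureReal_def, volume_latticeCell, ENNReal.toReal_ofReal hD.le, mul_comm] at this
  obtain ⟨hsum, hle⟩ := summable_and_tsum_le_integral_of_le_setIntegral
    (fun k => measurableSet_latticeCell M (e k))
    ((pairwise_disjoint_latticeCell M).comp_of_injective he) hf hf0
    (fun k => mul_nonneg hD.le (ha0 k)) hcell
  refine ⟨(summable_mul_left_iff hD.ne').1 hsum, ?_⟩
  rwa [le_div_iff₀' hD, ← tsum_mul_left]

end LatticeCell

end

theorem lattice_sum_le_integrals_general (n : ℕ)
    (M : (Fin n → ℝ) ≃ₗ[ℝ] (Fin n → ℝ)) :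
    ∃ C : ℝ, 0 < C ∧
      ∀ (g : Fin n → ℝ → ℝ) (t : Fin n → ℝ),
        (∀ i, 0 < t i) →
        (∀ i, ∀ s ∈ Set.Ioi (0 : ℝ), 0 ≤ g i s) →
        (∀ i, MeasureTheory.IntegrableOn (g i) (Set.Ioi 0)) →
        (∀ i, MonotoneOn (g i) (Set.Ioc 0 (t i))) →
        (∀ i, AntitoneOn (g i) (Set.Ici (t i))) →
        Summable (fun m : {m : Fin n → ℤ // ∀ i, 0 < M (fun j => (m j : ℝ)) i} =>
            ∏ i, g i (M (fun j => (m.1 j : ℝ)) i)) ∧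
        (∑' m : {m : Fin n → ℤ // ∀ i, 0 < M (fun j => (m j : ℝ)) i},
            ∏ i, g i (M (fun j => (m.1 j : ℝ)) i))
          ≤ C * ∏ i, ((∫ s in Set.Ioi (0 : ℝ), g i s) + g i (t i)) := by
  set r := ‖(M.toContinuousLinearEquiv : (Fin n → ℝ) →L[ℝ] (Fin n → ℝ))‖
  have hD : 0 < |LinearMap.det (M : (Fin n → ℝ) →ₗ[ℝ] (Fin n → ℝ))| :=
    abs_pos.2 (LinearEquiv.isUnit_det' M).ne_zero
  refine ⟨(2 * (r + 1)) ^ n / |LinearMap.det (M : (Fin n → ℝ) →ₗ[ℝ] (Fin n → ℝ))|,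
    by positivity, fun g t ht hg0 hgi hmono hanti => ?_⟩
  obtain ⟨hsum, hle⟩ := summable_and_tsum_le_of_le_on_latticeCell M
    (κ := {m : Fin n → ℤ // ∀ i, 0 < M (fun j => (m j : ℝ)) i}) Subtype.val_injective
    (Integrable.fintype_prod fun i => integrable_unimodalMajorant (hgi i))
    (fun y => Finset.prod_nonneg fun i _ => unimodalMajorant_nonneg (hg0 i) (ht i))
    (fun m y hy => prod_le_prod_unimodalMajorant hg0 ht hmono hanti m.2
      (abs_sub_le_of_mem_latticeCell M hy))
    (fun m => Finset.prod_nonneg fun i _ => hg0 i _ (m.2 i))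
  refine ⟨hsum, hle.trans ?_⟩
  rw [div_mul_eq_mul_div, div_le_div_iff_of_pos_right hD]
  simpa using integral_prod_unimodalMajorant_le hg0 ht hgi (norm_nonneg _)

theorem lattice_sum_le_integrals (n : ℕ) (hn : 0 < n)
    (M : (Fin n → ℝ) ≃ₗ[ℝ] (Fin n → ℝ)) :
    ∃ C : ℝ, 0 < C ∧
      ∀ (g : Fin n → ℝ → ℝ) (t : Fin n → ℝ),
        (∀ i, 0 < t i) →
        (∀ i, ∀ s ∈ Set.Ioi (0 : ℝ), 0 ≤ g i s) →
        (∀ i, MeasureTheory.IntegrableOn (g i) (Set.Ioi 0)) →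
        (∀ i, MonotoneOn (g i) (Set.Ioc 0 (t i))) →
        (∀ i, AntitoneOn (g i) (Set.Ici (t i))) →
        Summable (fun m : {m : Fin n → ℤ // ∀ i, 0 < M (fun j => (m j : ℝ)) i} =>
            ∏ i, g i (M (fun j => (m.1 j : ℝ)) i)) ∧
        (∑' m : {m : Fin n → ℤ // ∀ i, 0 < M (fun j => (m j : ℝ)) i},
            ∏ i, g i (M (fun j => (m.1 j : ℝ)) i))
          ≤ C * ∏ i, ((∫ s in Set.Ioi (0 : ℝ), g i s) + g i (t i)) :=
  lattice_sum_le_integrals_general n M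
end

section
/- For all reals 0 < a ≤ b there exists a constant C = C(a, b) such that for every integer k ≥ 3 and every s ∈ ℂ with a ≤ Re(s) ≤ b, one has | Γ(s + k − 1)/Γ(k − 1) − (k − 1)^s | ≤ C · (|s| + 1)² · (k − 1)^{Re(s)} / k, where Γ is the complex Gamma function and (k − 1)^s = exp(s · log(k − 1)). -/
/-!
Put `G(s, n) = Γ(s + n) / (Γ(n) n^s)`, so that the claim is `‖G(s, n) - 1‖ ≪ (‖s‖ + 1)² / n`
with `n = k - 1`. Euler's limit formula gives `G(s, n) → 1`, and
`G(s, n + 1) = G(s, n) (1 + s/n) (1 + 1/n)^(-s)`, where the factor `(1 + s/n) (1 + 1/n)^(-s)` is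
`1 + O((‖s‖ + 1)² / n²)` as soon as `‖s‖ ≤ n`. Log-convexity of `Γ` bounds `‖G(s, n)‖` uniformly for `0 < Re s ≤ b`, so
the increments `G(s, N + 1) - G(s, N)` are `O((‖s‖ + 1)² / N²)` and summing them from `N = n`
to `∞` gives the claim when `‖s‖ ≤ n`; when `‖s‖ > n` the uniform bound suffices.
-/

open Filter Topology Finset

namespace Real

theorem Gamma_add_le_Gamma_mul_rpow {y x m : ℝ} (hy : 0 < y) (hx : 0 < x) (hm : 1 ≤ m)
    (hxm : x ≤ m) : Gamma (y + x) ≤ Gamma y * (y + m - 1) ^ x := by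
  -- the slope of `log ∘ Γ` on `[y, y + x]` is at most its slope on `[y + m - 1, y + m]`,
  -- which is `log (y + m - 1)` by the functional equation
  have hym : 0 < y + m - 1 := by linarith
  have hconv := convexOn_log_Gamma
  have hfeq : log (Gamma (y + m)) = log (Gamma (y + m - 1)) + log (y + m - 1) := by
    rw [show y + m = (y + m - 1) + 1 by ring, Gamma_add_one hym.ne',
      log_mul hym.ne' (Gamma_pos_of_pos hym).ne', add_comm, add_sub_cancel_right]
  have hfar := hconv.secant_mono (a := y) (x := y + x) (y := y + m) (by simpa using hy)
    (by simp; linarith) (by simp; linarith) (by linarith) (by linarith) (by linarith)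
  have hnear := hconv.secant_mono (a := y + m) (x := y) (y := y + m - 1) (by simp; linarith)
    (by simpa using hy) (by simp; linarith) (by linarith) (by linarith) (by linarith)
  simp only [Function.comp_apply, add_sub_cancel_left, sub_sub_cancel_left, hfeq] at hfar hnear
  rw [div_le_iff₀ hx] at hfar
  rw [show y - (y + m) = -m by ring, div_neg, div_neg, div_one, neg_le_neg_iff,
    le_div_iff₀ (by linarith)] at hnear
  have hslope : log (Gamma (y + x)) - log (Gamma y) ≤ log (y + m - 1) * x :=
    hfar.trans (by gcongr; rw [div_le_iff₀ (by linarith)]; linarith)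
  have hGy := Gamma_pos_of_pos hy
  rw [← log_le_log_iff (Gamma_pos_of_pos (by linarith)) (by positivity),
    log_mul hGy.ne' (by positivity), log_rpow hym]
  linarith

theorem exists_Gamma_add_le (b : ℝ) :
    ∃ M, 0 < M ∧ ∀ y x : ℝ, 1 ≤ y → 0 < x → x ≤ b → Gamma (y + x) ≤ M * (Gamma y * y ^ x) := by
  set m := max 1 b
  have hm : 1 ≤ m := le_max_left 1 b
  refine ⟨m ^ m, by positivity, fun y x hy hx hxb => ?_⟩
  have hxm : x ≤ m := hxb.trans (le_max_right 1 b)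
  calc Gamma (y + x) ≤ Gamma y * (y + m - 1) ^ x :=
        Gamma_add_le_Gamma_mul_rpow (by linarith) hx hm hxm
    _ ≤ Gamma y * (m * y) ^ x := by gcongr <;> nlinarith
    _ = m ^ x * (Gamma y * y ^ x) := by rw [mul_rpow (by linarith) (by linarith)]; ring
    _ ≤ m ^ m * (Gamma y * y ^ x) := by gcongr

end Real

theorem norm_sub_le_of_tendsto_of_norm_succ_sub_le {E : Type*} [SeminormedAddCommGroup E]
    {g : ℕ → E} {l : E} {d : ℕ → ℝ} {n : ℕ} (hg : Tendsto g atTop (𝓝 l))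
    (hd : Tendsto d atTop (𝓝 0)) (hstep : ∀ N, n ≤ N → ‖g (N + 1) - g N‖ ≤ d N - d (N + 1)) :
    ‖g n - l‖ ≤ d n := by
  have hpartial : ∀ N, n ≤ N → ‖g N - g n‖ ≤ d n - d N := by
    intro N hN
    induction N, hN using Nat.le_induction with
    | base => simp
    | succ N hN ih =>
      calc ‖g (N + 1) - g n‖ = ‖(g (N + 1) - g N) + (g N - g n)‖ := by rw [sub_add_sub_cancel]
        _ ≤ ‖g (N + 1) - g N‖ + ‖g N - g n‖ := norm_add_le _ _
        _ ≤ d n - d (N + 1) := by linarith [hstep N hN]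
  have hlim := le_of_tendsto_of_tendsto ((hg.sub_const (g n)).norm) (hd.const_sub (d n))
    (eventually_atTop.2 ⟨n, hpartial⟩)
  rwa [norm_sub_rev, sub_zero] at hlim

namespace Complex

theorem norm_Gamma_le_Gamma_re {s : ℂ} (hs : 0 < s.re) : ‖Gamma s‖ ≤ Real.Gamma s.re := by
  rw [Gamma_eq_integral hs, Real.Gamma_eq_integral hs, GammaIntegral]
  refine (MeasureTheory.norm_integral_le_integral_norm _).trans_eq
    (MeasureTheory.setIntegral_congr_fun measurableSet_Ioi fun x hx => ?_)
  rw [norm_mul, norm_real, Real.norm_of_nonneg (Real.exp_pos _).le, norm_cpow_eq_rpow_re_of_pos hx]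
  simp

theorem norm_Gamma_natCast (n : ℕ) : ‖Gamma n‖ = Real.Gamma n := by
  rw [← ofReal_natCast, Gamma_ofReal, norm_real, Real.norm_eq_abs, abs_eq_self]
  exact Real.Gamma_nonneg_of_nonneg n.cast_nonneg

theorem add_natCast_ne_zero_of_re_pos {s : ℂ} (hs : 0 < s.re) (m : ℕ) : s + m ≠ 0 := by
  intro h
  have := congrArg re h
  simp only [add_re, natCast_re, zero_re] at this
  linarith [m.cast_nonneg (α := ℝ)]

theorem Gamma_add_nat_eq_mul_prod {s : ℂ} (hs : ∀ m : ℕ, s + m ≠ 0) (n : ℕ) :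
    Gamma (s + n) = Gamma s * ∏ j ∈ range n, (s + j) := by
  induction n with
  | zero => simp
  | succ n ih => rw [Nat.cast_succ, ← add_assoc, Gamma_add_one _ (hs n), ih, prod_range_succ]; ring

theorem norm_one_add_mul_mul_exp_neg_mul_log_sub_one_le {s : ℂ} {t : ℝ} (ht : 0 ≤ t)
    (hst : ‖s‖ * t ≤ 1) :
    ‖(1 + s * t) * exp (-(s * Real.log (1 + t))) - 1‖ ≤ 3 * (‖s‖ + 1) ^ 2 * t ^ 2 := by
  set L := Real.log (1 + t)
  have hL_le : L ≤ t := by linarith [Real.log_le_sub_one_of_pos (by linarith : 0 < 1 + t)]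
  have hL_ge : t - t ^ 2 ≤ L := by
    have hinv : (1 + t)⁻¹ ≤ 1 - t + t ^ 2 := by
      rw [inv_le_iff_one_le_mul₀ (by positivity)]
      nlinarith [pow_nonneg ht 3]
    linarith [Real.one_sub_inv_le_log_of_pos (by linarith : 0 < 1 + t)]
  have hL0 : 0 ≤ L := Real.log_nonneg (by linarith)
  set z : ℂ := -(s * L)
  have hz : ‖z‖ = ‖s‖ * L := by rw [norm_neg, norm_mul, norm_real, Real.norm_of_nonneg hL0]
  have hz1 : ‖z‖ ≤ 1 := hz ▸ (mul_le_mul_of_nonneg_left hL_le (norm_nonneg s)).trans hst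
  have hst_norm : ‖s * (t : ℂ)‖ = ‖s‖ * t := by rw [norm_mul, norm_real, Real.norm_of_nonneg ht]
  -- second-order expansion of `(1 + st) e^z` with `z = -sL`, using `L = t + O(t²)`
  have hsplit : (1 + s * t) * exp z - 1 =
      s * ((t - L : ℝ) : ℂ) + s * t * z + (1 + s * t) * (exp z - 1 - z) := by
    push_cast; ring
  have hfactor : ‖1 + s * t‖ ≤ 2 :=
    (norm_add_le _ _).trans (by rw [norm_one, hst_norm]; linarith)
  have hexp : ‖exp z - 1 - z‖ ≤ (‖s‖ * t) ^ 2 :=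
    (norm_exp_sub_one_sub_id_le hz1).trans (by rw [hz]; gcongr)
  have hgap : ‖s‖ * (t - L) ≤ ‖s‖ * t ^ 2 :=
    mul_le_mul_of_nonneg_left (by linarith) (norm_nonneg s)
  have hquad : ‖s‖ * t * (‖s‖ * L) ≤ ‖s‖ * t * (‖s‖ * t) := by gcongr
  have hrem := mul_le_mul hfactor hexp (norm_nonneg _) zero_le_two
  rw [hsplit]
  calc _ ≤ ‖s * ((t - L : ℝ) : ℂ)‖ + ‖s * t * z‖ + ‖(1 + s * t) * (exp z - 1 - z)‖ :=
        norm_add₃_le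
    _ ≤ ‖s‖ * t ^ 2 + (‖s‖ * t) * (‖s‖ * t) + 2 * (‖s‖ * t) ^ 2 := by
        rw [norm_mul (s * t) z, hst_norm, hz, norm_mul (1 + s * t), norm_mul s, norm_real,
          Real.norm_of_nonneg (by linarith)]
        linarith
    _ ≤ 3 * (‖s‖ + 1) ^ 2 * t ^ 2 := by nlinarith [norm_nonneg s, sq_nonneg t]

noncomputable def gammaRatio (s : ℂ) (n : ℕ) : ℂ :=
  Gamma (s + n) / (Gamma n * (n : ℂ) ^ s)

theorem exists_norm_gammaRatio_le (b : ℝ) :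
    ∃ M, 0 < M ∧ ∀ n : ℕ, 1 ≤ n → ∀ s : ℂ, 0 < s.re → s.re ≤ b → ‖gammaRatio s n‖ ≤ M := by
  obtain ⟨M, hM, hGamma⟩ := Real.exists_Gamma_add_le b
  refine ⟨M, hM, fun n hn s hs hsb => ?_⟩
  have hn' : (1 : ℝ) ≤ n := by exact_mod_cast hn
  have hre : (s + n).re = n + s.re := by simp [add_comm]
  have hGn := Real.Gamma_pos_of_pos (by linarith : (0 : ℝ) < n)
  rw [gammaRatio, norm_div, norm_mul, norm_Gamma_natCast, norm_natCast_cpow_of_pos hn,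
    div_le_iff₀ (by positivity)]
  calc ‖Gamma (s + n)‖ ≤ Real.Gamma (n + s.re) :=
        hre ▸ norm_Gamma_le_Gamma_re (by rw [hre]; positivity)
    _ ≤ M * (Real.Gamma n * (n : ℝ) ^ s.re) := hGamma n s.re hn' hs hsb

theorem gammaRatio_succ {s : ℂ} {n : ℕ} (hn : n ≠ 0) (hs : s + n ≠ 0) :
    gammaRatio s (n + 1) =
      gammaRatio s n * ((1 + s * (n : ℝ)⁻¹) * exp (-(s * Real.log (1 + (n : ℝ)⁻¹)))) := by
  have hn' : (0 : ℝ) < n := by positivity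
  have hpow : ((n + 1 : ℕ) : ℂ) ^ s = (n : ℂ) ^ s * exp (s * Real.log (1 + (n : ℝ)⁻¹)) := by
    rw [cpow_def_of_ne_zero (Nat.cast_ne_zero.2 n.succ_ne_zero),
      cpow_def_of_ne_zero (by exact_mod_cast hn), ← natCast_log, ← natCast_log, ← exp_add]
    congr 1
    rw [show ((n + 1 : ℕ) : ℝ) = n * (1 + (n : ℝ)⁻¹) by field_simp; push_cast; ring,
      Real.log_mul hn'.ne' (by positivity)]
    push_cast
    ring
  have hGs : Gamma (s + (n + 1 : ℕ)) = (s + n) * Gamma (s + n) := by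
    rw [Nat.cast_succ, ← add_assoc, Gamma_add_one _ hs]
  have hGn : Gamma ((n + 1 : ℕ) : ℂ) = n * Gamma n := by
    rw [Nat.cast_succ, Gamma_add_one _ (by exact_mod_cast hn)]
  rw [gammaRatio, gammaRatio, hGs, hGn, hpow, exp_neg]
  push_cast
  field_simp
  ring

theorem gammaRatio_eq_Gamma_div_GammaSeq_mul {s : ℂ} (hs : ∀ m : ℕ, s + m ≠ 0) {n : ℕ}
    (hn : n ≠ 0) : gammaRatio s n = Gamma s / GammaSeq s n * (n / (n + s)) := by
  obtain ⟨m, rfl⟩ : ∃ m, n = m + 1 := ⟨n - 1, by omega⟩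
  have hsm : (m + 1 : ℂ) + s ≠ 0 := by rw [add_comm]; exact_mod_cast hs (m + 1)
  rw [gammaRatio, GammaSeq, Gamma_add_nat_eq_mul_prod hs, prod_range_succ _ (m + 1),
    Nat.cast_succ m, Gamma_nat_eq_factorial, Nat.factorial_succ]
  push_cast at hsm ⊢
  field_simp
  ring

theorem tendsto_gammaRatio {s : ℂ} (hs : 0 < s.re) : Tendsto (gammaRatio s) atTop (𝓝 1) := by
  have hΓ : Gamma s ≠ 0 := Gamma_ne_zero_of_re_pos hs
  have hlim := ((tendsto_const_nhds (x := Gamma s)).div (GammaSeq_tendsto_Gamma s) hΓ).mul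
    (tendsto_natCast_div_add_atTop s)
  rw [div_self hΓ, one_mul] at hlim
  refine hlim.congr' ?_
  filter_upwards [eventually_ne_atTop 0] with n hn
  exact (gammaRatio_eq_Gamma_div_GammaSeq_mul (add_natCast_ne_zero_of_re_pos hs) hn).symm

theorem norm_gammaRatio_sub_one_le_of_norm_le {s : ℂ} {M : ℝ} {n : ℕ} (hs : 0 < s.re)
    (hn : 2 ≤ n) (hsn : ‖s‖ ≤ n) (hM : ∀ N, n ≤ N → ‖gammaRatio s N‖ ≤ M) :
    ‖gammaRatio s n - 1‖ ≤ 3 * M * (‖s‖ + 1) ^ 2 / (n - 1) := by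
  set u := (‖s‖ + 1) ^ 2
  have hM0 : 0 ≤ M := (norm_nonneg _).trans (hM n le_rfl)
  refine norm_sub_le_of_tendsto_of_norm_succ_sub_le (d := fun N => 3 * M * u / (N - 1))
    (tendsto_gammaRatio hs) (tendsto_const_nhds.div_atTop
      (tendsto_atTop_add_const_right _ _ tendsto_natCast_atTop_atTop)) fun N hnN => ?_
  have hN : (2 : ℝ) ≤ N := by exact_mod_cast hn.trans hnN
  have hsN : ‖s‖ * (N : ℝ)⁻¹ ≤ 1 := by
    rw [← div_eq_mul_inv, div_le_one (by linarith)]; exact hsn.trans (by exact_mod_cast hnN)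
  rw [gammaRatio_succ (by omega) (add_natCast_ne_zero_of_re_pos hs N), ← mul_sub_one,
    norm_mul]
  calc _ ≤ M * (3 * u * ((N : ℝ)⁻¹) ^ 2) :=
        mul_le_mul (hM N hnN) (norm_one_add_mul_mul_exp_neg_mul_log_sub_one_le (by positivity) hsN)
          (norm_nonneg _) hM0
    _ ≤ _ := by
      push_cast
      rw [add_sub_cancel_right, div_sub_div _ _ (by linarith) (by linarith), inv_pow,
        ← div_eq_mul_inv, mul_div_assoc', div_le_div_iff₀ (by positivity) (by nlinarith)]
      nlinarith [mul_nonneg hM0 (by positivity : (0 : ℝ) ≤ u)]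

theorem norm_gammaRatio_sub_one_le {s : ℂ} {M : ℝ} {n : ℕ} (hs : 0 < s.re) (hn : 2 ≤ n)
    (hM : ∀ N, n ≤ N → ‖gammaRatio s N‖ ≤ M) :
    ‖gammaRatio s n - 1‖ ≤ 9 * (M + 1) * (‖s‖ + 1) ^ 2 / (n + 1) := by
  have hn' : (2 : ℝ) ≤ n := by exact_mod_cast hn
  have hM0 : 0 ≤ M := (norm_nonneg _).trans (hM n le_rfl)
  rcases le_or_gt ‖s‖ n with hsn | hsn
  · refine (norm_gammaRatio_sub_one_le_of_norm_le hs hn hsn hM).trans ?_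
    rw [div_le_div_iff₀ (by linarith) (by linarith)]
    nlinarith [mul_nonneg hM0 (sq_nonneg (‖s‖ + 1))]
  · calc ‖gammaRatio s n - 1‖ ≤ M + 1 := (norm_sub_le _ _).trans (by simpa using hM n le_rfl)
      _ ≤ 9 * (M + 1) * (‖s‖ + 1) ^ 2 / (n + 1) := by
        rw [le_div_iff₀ (by linarith)]
        nlinarith [mul_le_mul hsn.le hsn.le (by linarith) (norm_nonneg s)]

theorem Gamma_add_div_Gamma_sub_cpow (s : ℂ) {n : ℕ} (hn : n ≠ 0) :
    Gamma (s + n) / Gamma n - (n : ℂ) ^ s = (n : ℂ) ^ s * (gammaRatio s n - 1) := by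
  have hpow : (n : ℂ) ^ s ≠ 0 := by
    rw [Ne, cpow_eq_zero_iff]; exact fun h => hn (by exact_mod_cast h.1)
  rw [gammaRatio]
  field_simp

end Complex

theorem gamma_ratio_asymptotic_general (a b : ℝ) (ha : 0 < a) :
    ∃ C : ℝ, 0 < C ∧
      ∀ k : ℕ, 3 ≤ k → ∀ s : ℂ, a ≤ s.re → s.re ≤ b →
        ‖Complex.Gamma (s + k - 1) / Complex.Gamma ((k : ℂ) - 1)
            - ((k : ℂ) - 1) ^ s‖
          ≤ C * (‖s‖ + 1) ^ 2 * ((k : ℝ) - 1) ^ s.re / k := by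
  obtain ⟨M, hM, hbound⟩ := Complex.exists_norm_gammaRatio_le b
  refine ⟨9 * (M + 1), by positivity, fun k hk s hsa hsb => ?_⟩
  obtain ⟨n, rfl⟩ : ∃ n, k = n + 1 := ⟨k - 1, by omega⟩
  have hs : 0 < s.re := ha.trans_le hsa
  have hest := Complex.norm_gammaRatio_sub_one_le hs (by omega : 2 ≤ n)
    fun N hN => hbound N (by omega) s hs hsb
  rw [show s + ((n + 1 : ℕ) : ℂ) - 1 = s + n by push_cast; ring,
    show ((n + 1 : ℕ) : ℂ) - 1 = n by push_cast; ring,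
    show ((n + 1 : ℕ) : ℝ) - 1 = n by push_cast; ring,
    Complex.Gamma_add_div_Gamma_sub_cpow s (by omega), norm_mul,
    Complex.norm_natCast_cpow_of_pos (by omega)]
  calc _ ≤ (n : ℝ) ^ s.re * (9 * (M + 1) * (‖s‖ + 1) ^ 2 / (n + 1)) := by gcongr
    _ = _ := by push_cast; ring

theorem gamma_ratio_asymptotic (a b : ℝ) (ha : 0 < a) (hab : a ≤ b) :
    ∃ C : ℝ, 0 < C ∧
      ∀ k : ℕ, 3 ≤ k → ∀ s : ℂ, a ≤ s.re → s.re ≤ b →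
        ‖Complex.Gamma (s + k - 1) / Complex.Gamma ((k : ℂ) - 1)
            - ((k : ℂ) - 1) ^ s‖
          ≤ C * (‖s‖ + 1) ^ 2 * ((k : ℝ) - 1) ^ s.re / k :=
  gamma_ratio_asymptotic_general a b ha
end

section
/- Let F be a totally real number field of degree n with ring of integers 𝒪 and real embeddings σ_1,…,σ_n. There exists a constant C = C(F) such that for every nonzero η ∈ 𝒪 and every n-tuple x = (x_1,…,x_n) of reals with x_i ≥ 2 for all i, the number of elements η' ∈ 𝒪 generating the same ideal as η (i.e. (η') = (η)) and satisfying 0 < σ_i(η') ≤ x_i for all i is at most C · (1 + log ‖x‖)^{n−1}, where ‖x‖ = max_i x_i. -/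
/-!
If `(η') = (η)` then `η' = η u` for a unit `u`. The box condition bounds every `|σᵢ(η')|` above
by `‖x‖`, and since `|N(η')| ≥ 1` also below by `‖x‖^{-(n-1)}`; so the logarithmic embedding of
`u` lies within `n log ‖x‖` of a point depending only on `η`. By Dirichlet's unit theorem `u` is a
root of unity times `∏ εⱼ ^ eⱼ` for a fundamental system `(εⱼ)`, and the exponents `eⱼ` are the
coordinates of the logarithmic embedding of `u` in a basis of the unit lattice. Each exponent thus
ranges over an interval of length `O(1 + log ‖x‖)`, and there are `n - 1` of them.
-/

open NumberField NumberField.InfinitePlace NumberField.Units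
  NumberField.Units.dirichletUnitTheorem

theorem Int.card_Icc_ceil_sub_floor_add_le (a : ℝ) {R : ℝ} (hR : 0 ≤ R) :
    ((Finset.Icc ⌈a - R⌉ ⌊a + R⌋).card : ℝ) ≤ 2 * R + 1 := by
  rw [Int.card_Icc, ← Int.cast_natCast, Int.toNat_eq_max, Int.cast_max, Int.cast_zero]
  refine max_le ?_ (by linarith)
  push_cast
  linarith [Int.floor_le (a + R), Int.le_ceil (a - R)]

theorem setOf_forall_abs_intCast_sub_le_eq_Icc {κ : Type*} (a : κ → ℝ) (R : ℝ) :
    {k : κ → ℤ | ∀ j, |(k j : ℝ) - a j| ≤ R} =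
      Set.Icc (fun j => ⌈a j - R⌉) (fun j => ⌊a j + R⌋) := by
  ext k
  simp only [Set.mem_ofPred_eq, Set.mem_Icc, Pi.le_def, abs_sub_le_iff, Int.ceil_le,
    Int.le_floor, ← forall_and]
  exact forall_congr' fun j => by constructor <;> rintro ⟨h₁, h₂⟩ <;> constructor <;> linarith

theorem finite_setOf_forall_abs_intCast_sub_le {κ : Type*} [Fintype κ] (a : κ → ℝ) (R : ℝ) :
    {k : κ → ℤ | ∀ j, |(k j : ℝ) - a j| ≤ R}.Finite := by
  classical
  rw [setOf_forall_abs_intCast_sub_le_eq_Icc]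
  exact Set.finite_Icc _ _

theorem ncard_setOf_forall_abs_intCast_sub_le {κ : Type*} [Fintype κ]
    (a : κ → ℝ) {R : ℝ} (hR : 0 ≤ R) :
    ({k : κ → ℤ | ∀ j, |(k j : ℝ) - a j| ≤ R}.ncard : ℝ) ≤ (2 * R + 1) ^ Fintype.card κ := by
  classical
  rw [setOf_forall_abs_intCast_sub_le_eq_Icc, ← Finset.coe_Icc, Set.ncard_coe_finset,
    Pi.card_Icc, Nat.cast_prod, ← Finset.card_univ, ← Finset.prod_const]
  exact Finset.prod_le_prod (fun _ _ => Nat.cast_nonneg _)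
    fun j _ => Int.card_Icc_ceil_sub_floor_add_le (a j) hR

theorem mul_add_one_pow_le {a L : ℝ} (ha : 0 ≤ a) (hL : 0 ≤ L) {r m : ℕ} (h : r ≤ m) :
    (a * L + 1) ^ r ≤ (a + 1) ^ m * (1 + L) ^ m :=
  calc (a * L + 1) ^ r ≤ ((a + 1) * (1 + L)) ^ r := by gcongr; nlinarith
    _ ≤ ((a + 1) * (1 + L)) ^ m :=
        pow_le_pow_right₀ (one_le_mul_of_one_le_of_one_le (by linarith) (by linarith)) h
    _ = (a + 1) ^ m * (1 + L) ^ m := mul_pow _ _ _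

theorem abs_le_sum_mul_of_le_mul_of_sum_nonneg {ι : Type*} [Fintype ι] {a m : ι → ℝ} {L : ℝ}
    (hm : ∀ i, 0 ≤ m i) (hL : 0 ≤ L) (ha : ∀ i, a i ≤ m i * L) (hsum : 0 ≤ ∑ i, a i) (i : ι) :
    |a i| ≤ (∑ i, m i) * L := by
  classical
  have hmL : ∀ j, 0 ≤ m j * L := fun j => mul_nonneg (hm j) hL
  have hi : m i * L ≤ ∑ j, m j * L :=
    Finset.single_le_sum (fun j _ => hmL j) (Finset.mem_univ i)
  have hrest : ∑ j ∈ Finset.univ.erase i, a j ≤ ∑ j, m j * L :=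
    (Finset.sum_le_sum fun j _ => ha j).trans
      (Finset.sum_le_sum_of_subset_of_nonneg (Finset.erase_subset _ _) fun j _ _ => hmL j)
  rw [Finset.sum_mul, abs_le]
  constructor
  · linarith [Finset.add_sum_erase Finset.univ a (Finset.mem_univ i)]
  · linarith [ha i]

theorem Module.Basis.abs_equivFun_apply_le {ι E : Type*} [Fintype ι] [NormedAddCommGroup E]
    [NormedSpace ℝ E] [FiniteDimensional ℝ E] (B : Module.Basis ι ℝ E) (v : E) (j : ι) :
    |B.equivFun v j| ≤ ‖(B.equivFunL : E →L[ℝ] ι → ℝ)‖ * ‖v‖ :=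
  (norm_le_pi_norm (B.equivFunL v) j).trans ((B.equivFunL : E →L[ℝ] ι → ℝ).le_opNorm v)

namespace NumberField.InfinitePlace

variable {K : Type*} [Field K] [NumberField K]

theorem abs_mult_mul_log_le {α : 𝓞 K} (hα : α ≠ 0) {X : ℝ} (hX : 1 ≤ X)
    (hαX : ∀ w : InfinitePlace K, w α ≤ X) (w : InfinitePlace K) :
    |mult w * Real.log (w α)| ≤ Module.finrank ℚ K * Real.log X := by
  have hpos : ∀ v : InfinitePlace K, 0 < v α :=
    fun v => pos_iff.mpr (RingOfIntegers.coe_ne_zero_iff.mpr hα)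
  have hnorm : 0 ≤ ∑ v : InfinitePlace K, mult v * Real.log (v α) := by
    have h := congr_arg Real.log (prod_eq_abs_norm (α : K))
    rw [Real.log_prod fun v _ => pow_ne_zero _ (hpos v).ne'] at h
    simp only [Real.log_pow] at h
    rw [h, ← Algebra.coe_norm_int]
    exact Real.log_nonneg (mod_cast Int.one_le_abs (Algebra.norm_ne_zero_iff.mpr hα))
  rw [← sum_mult_eq, Nat.cast_sum]
  exact abs_le_sum_mul_of_le_mul_of_sum_nonneg (fun v => Nat.cast_nonneg _) (Real.log_nonneg hX)
    (fun v => mul_le_mul_of_nonneg_left (Real.log_le_log (hpos v) (hαX v)) (Nat.cast_nonneg _))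
    hnorm w

theorem exists_eq_abs_of_injective {n : ℕ} {σ : Fin n → (K →+* ℝ)} (hσ : Function.Injective σ)
    (hdeg : Module.finrank ℚ K = n) (w : InfinitePlace K) : ∃ i, ∀ y : K, w y = |σ i y| := by
  let τ : Fin n → (K →+* ℂ) := fun i => Complex.ofRealHom.comp (σ i)
  have hτ : Function.Injective τ := fun i j h =>
    hσ (RingHom.ext fun y => Complex.ofReal_injective (RingHom.congr_fun h y))
  have hτ_surj : Function.Surjective τ :=
    ((Fintype.bijective_iff_injective_and_card τ).mpr
      ⟨hτ, by rw [Fintype.card_fin, Embeddings.card, hdeg]⟩).2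
  obtain ⟨i, hi⟩ := hτ_surj w.embedding
  refine ⟨i, fun y => ?_⟩
  rw [← norm_embedding_eq, ← hi]
  exact Complex.norm_real _

end NumberField.InfinitePlace

namespace NumberField.Units

variable (K : Type*) [Field K] [NumberField K]

open scoped Classical in
noncomputable def realBasisUnitLattice : Module.Basis (Fin (rank K)) ℝ (logSpace K) :=
  (basisUnitLattice K).ofZLatticeBasis ℝ (unitLattice K)

variable {K}

theorem logEmbedding_torsion_mul_prod_fundSystem (ζ : torsion K) (e : Fin (rank K) → ℤ) :
    logEmbedding K (Additive.ofMul ((ζ : (𝓞 K)ˣ) * ∏ i, fundSystem K i ^ e i)) =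
      ∑ i, (e i : ℝ) • realBasisUnitLattice K i := by
  simp only [ofMul_mul, ofMul_prod, ofMul_zpow, map_add, map_sum, map_zsmul,
    logEmbedding_eq_zero_iff.mpr ζ.2, zero_add, logEmbedding_fundSystem, realBasisUnitLattice,
    Module.Basis.ofZLatticeBasis_apply, Int.cast_smul_eq_zsmul]

theorem realBasisUnitLattice_equivFun_logEmbedding (ζ : torsion K) (e : Fin (rank K) → ℤ) :
    (realBasisUnitLattice K).equivFun
        (logEmbedding K (Additive.ofMul ((ζ : (𝓞 K)ˣ) * ∏ i, fundSystem K i ^ e i))) =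
      fun i => (e i : ℝ) := by
  rw [logEmbedding_torsion_mul_prod_fundSystem, ← Module.Basis.equivFun_symm_apply,
    LinearEquiv.apply_symm_apply]

variable (K) in
theorem exists_ncard_setOf_abs_logEmbedding_sub_le_le : ∃ A : ℝ, 0 ≤ A ∧
    ∀ (c : logSpace K) {M : ℝ}, 0 ≤ M →
      {u : (𝓞 K)ˣ | ∀ w, |logEmbedding K (Additive.ofMul u) w - c w| ≤ M}.Finite ∧
      ({u : (𝓞 K)ˣ | ∀ w, |logEmbedding K (Additive.ofMul u) w - c w| ≤ M}.ncard : ℝ) ≤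
        Nat.card (torsion K) * (2 * A * M + 1) ^ rank K := by
  classical
  set B := realBasisUnitLattice K
  set A := ‖(B.equivFunL : logSpace K →L[ℝ] Fin (rank K) → ℝ)‖
  refine ⟨A, norm_nonneg _, fun c M hM => ?_⟩
  set box := {k : Fin (rank K) → ℤ | ∀ j, |(k j : ℝ) - B.equivFun c j| ≤ A * M}
  have hbox : box.Finite := finite_setOf_forall_abs_intCast_sub_le _ _
  let f : torsion K × (Fin (rank K) → ℤ) → (𝓞 K)ˣ :=
    fun p => (p.1 : (𝓞 K)ˣ) * ∏ i, fundSystem K i ^ p.2 i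
  set dom := (Set.univ : Set (torsion K)) ×ˢ box
  have hdom : dom.Finite := Set.finite_univ.prod hbox
  have hsub : {u : (𝓞 K)ˣ | ∀ w, |logEmbedding K (Additive.ofMul u) w - c w| ≤ M} ⊆
      f '' dom := by
    intro u hu
    obtain ⟨⟨ζ, e⟩, rfl, -⟩ := exist_unique_eq_mul_prod K u
    refine ⟨(ζ, e), ⟨Set.mem_univ _, fun j => ?_⟩, rfl⟩
    replace hu : ‖logEmbedding K (Additive.ofMul (f (ζ, e))) - c‖ ≤ M :=
      (pi_norm_le_iff_of_nonneg hM).mpr hu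
    have h := B.abs_equivFun_apply_le (logEmbedding K (Additive.ofMul (f (ζ, e))) - c) j
    rw [map_sub, Pi.sub_apply, realBasisUnitLattice_equivFun_logEmbedding] at h
    exact h.trans (mul_le_mul_of_nonneg_left hu (norm_nonneg _))
  have hfin : (f '' dom).Finite := hdom.image f
  refine ⟨hfin.subset hsub, ?_⟩
  calc _ ≤ ((f '' dom).ncard : ℝ) := by exact_mod_cast Set.ncard_le_ncard hsub hfin
    _ ≤ (dom.ncard : ℝ) := by exact_mod_cast Set.ncard_image_le hdom
    _ ≤ _ := by
        rw [Set.ncard_prod, Set.ncard_univ, Nat.cast_mul, mul_assoc]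
        refine mul_le_mul_of_nonneg_left ?_ (Nat.cast_nonneg _)
        simpa only [Fintype.card_fin, mul_assoc] using
          ncard_setOf_forall_abs_intCast_sub_le (B.equivFun c) (mul_nonneg (norm_nonneg _) hM)

theorem abs_logEmbedding_add_le {α β : 𝓞 K} (hβ : β ≠ 0) {u : (𝓞 K)ˣ} (h : α = β * u)
    {X : ℝ} (hX : 1 ≤ X) (hαX : ∀ w : InfinitePlace K, w α ≤ X)
    (w : {w : InfinitePlace K // w ≠ w₀}) :
    |logEmbedding K (Additive.ofMul u) w + mult w.1 * Real.log (w.1 β)| ≤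
      Module.finrank ℚ K * Real.log X := by
  have hβw : w.1 β ≠ 0 := (InfinitePlace.pos_iff.mpr (RingOfIntegers.coe_ne_zero_iff.mpr hβ)).ne'
  have hα : α ≠ 0 := h ▸ mul_ne_zero hβ u.ne_zero
  have hlog : mult w.1 * Real.log (w.1 α) =
      logEmbedding K (Additive.ofMul u) w + mult w.1 * Real.log (w.1 β) := by
    rw [logEmbedding_component, h]
    push_cast
    rw [map_mul, Real.log_mul hβw (pos_at_place u w.1).ne']
    ring
  exact hlog ▸ abs_mult_mul_log_le hα hX hαX w.1

theorem rank_le_finrank_sub_one : rank K ≤ Module.finrank ℚ K - 1 := by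
  have h₁ := InfinitePlace.card_add_two_mul_card_eq_rank K
  have h₂ := InfinitePlace.card_eq_nrRealPlaces_add_nrComplexPlaces K
  rw [rank]
  omega

end NumberField.Units

theorem associates_in_box_count_general (F : Type) [Field F] [NumberField F]
    (n : ℕ)
    (σ : Fin n → (F →+* ℝ))
    (hσ : Function.Injective σ)
    (hdeg : Module.finrank ℚ F = n) :
    ∃ C : ℝ, 0 < C ∧
      ∀ η : 𝓞 F, η ≠ 0 → ∀ x : Fin n → ℝ, (∀ i, 2 ≤ x i) →
        (Nat.card {η' : 𝓞 F // Ideal.span {η'} = Ideal.span {η} ∧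
            ∀ i, 0 < σ i (algebraMap (𝓞 F) F η') ∧
              σ i (algebraMap (𝓞 F) F η') ≤ x i} : ℝ)
          ≤ C * (1 + Real.log (⨆ i, x i)) ^ (n - 1) := by
  obtain ⟨A, hA, hcount⟩ := exists_ncard_setOf_abs_logEmbedding_sub_le_le F
  have hn : 0 < n := hdeg ▸ Module.finrank_pos
  refine ⟨Nat.card (torsion F) * (2 * A * n + 1) ^ (n - 1),
    mul_pos (Nat.cast_pos.mpr Nat.card_pos) (by positivity), fun η hη x hx => ?_⟩
  have hxX : ∀ i, x i ≤ ⨆ i, x i := le_ciSup (Set.finite_range x).bddAbove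
  have hX : 1 ≤ ⨆ i, x i := by linarith [hx ⟨0, hn⟩, hxX ⟨0, hn⟩]
  set L := Real.log (⨆ i, x i)
  have hL : 0 ≤ L := Real.log_nonneg hX
  let c : logSpace F := fun w => -(mult w.1 * Real.log (w.1 η))
  obtain ⟨hU, hUcard⟩ := hcount c (by positivity : 0 ≤ (n : ℝ) * L)
  set U := {u : (𝓞 F)ˣ | ∀ w, |logEmbedding F (Additive.ofMul u) w - c w| ≤ n * L}
  have hsub : {η' : 𝓞 F | Ideal.span {η'} = Ideal.span {η} ∧
      ∀ i, 0 < σ i (algebraMap (𝓞 F) F η') ∧ σ i (algebraMap (𝓞 F) F η') ≤ x i} ⊆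
      (fun u : (𝓞 F)ˣ => η * u) '' U := by
    rintro η' ⟨hspan, hbox⟩
    obtain ⟨u, hu⟩ := (Ideal.span_singleton_eq_span_singleton.mp hspan).symm
    have hη'X : ∀ v : InfinitePlace F, v η' ≤ ⨆ i, x i := fun v => by
      obtain ⟨i, hi⟩ := exists_eq_abs_of_injective hσ hdeg v
      rw [hi, abs_of_pos (hbox i).1]
      exact (hbox i).2.trans (hxX i)
    refine ⟨u, fun w => ?_, hu⟩
    rw [sub_neg_eq_add, ← hdeg]
    exact abs_logEmbedding_add_le hη hu.symm hX hη'X w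
  calc _ ≤ (((fun u : (𝓞 F)ˣ => η * u) '' U).ncard : ℝ) := by
        exact_mod_cast Set.ncard_le_ncard hsub (hU.image _)
    _ ≤ (U.ncard : ℝ) := by exact_mod_cast Set.ncard_image_le hU
    _ ≤ Nat.card (torsion F) * (2 * A * n * L + 1) ^ rank F := by rwa [mul_assoc (2 * A)]
    _ ≤ Nat.card (torsion F) * ((2 * A * n + 1) ^ (n - 1) * (1 + L) ^ (n - 1)) := by
        gcongr
        exact mul_add_one_pow_le (by positivity) hL (hdeg ▸ rank_le_finrank_sub_one)
    _ = _ := by rw [← mul_assoc]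

theorem associates_in_box_count (F : Type) [Field F] [NumberField F]
    (n : ℕ) (hn : 0 < n)
    (σ : Fin n → (F →+* ℝ))
    (hσ : Function.Injective σ)
    (hdeg : Module.finrank ℚ F = n) :
    ∃ C : ℝ, 0 < C ∧
      ∀ η : 𝓞 F, η ≠ 0 → ∀ x : Fin n → ℝ, (∀ i, 2 ≤ x i) →
        (Nat.card {η' : 𝓞 F // Ideal.span {η'} = Ideal.span {η} ∧
            ∀ i, 0 < σ i (algebraMap (𝓞 F) F η') ∧
              σ i (algebraMap (𝓞 F) F η') ≤ x i} : ℝ)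
          ≤ C * (1 + Real.log (⨆ i, x i)) ^ (n - 1) :=
  associates_in_box_count_general F n σ hσ hdeg
end
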